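/- Let θ ≥ 0, let m ≥ 1, let A, B ∈ ℝ^{mn×mn} be viewed as n×n block matrices with m×m blocks A_{kl}, B_{k'l'}, and let Θ_{klk'l'rαβz} ∈ ℝ, for (k,l,k',l') ∈ {1,…,n}^4, r ∈ {1,…,R}, (α,β,z) ∈ {1,…,m}^3, satisfy |Θ_{klk'l'rαβz}| ≤ θ. Define the error matrix E ∈ ℝ^{mn×mn} blockwise by (E_{ij})_{αβ} = Σ_{r=1}^R w_{ijr} Σ_{k,l=1}^n Σ_{k',l'=1}^n Σ_{z=1}^m u_{klr} v_{k'l'r} (A_{kl})_{αz} (B_{k'l'})_{zβ} Θ_{klk'l'rαβz}. Then ‖E‖ ≤ θ · √R · ‖A‖ · ‖B‖ · √(Σ_{r=1}^R ‖U_{::r}‖² ‖V_{::r}‖² ‖W_{::r}‖²), where U_{::r} ∈ ℝ^{n×n} is the r-th frontal slice of U (so ‖U_{::r}‖² = Σ_{k,l} u_{klr}²), and similarly for V_{::r} and W_{::r}. -/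

import Mathlib

open scoped BigOperators Matrix

/-- Frobenius norm of a real matrix. -/
noncomputable def frob {ι κ : Type*} [Fintype ι] [Fintype κ] (A : Matrix ι κ ℝ) : ℝ :=
  Real.sqrt (∑ i, ∑ j, (A i j) ^ 2)

/-- Frobenius norm of a 6-mode tensor. -/
noncomputable def frob6 {n : ℕ} (T : Fin n → Fin n → Fin n → Fin n → Fin n → Fin n → ℝ) : ℝ :=
  Real.sqrt (∑ k, ∑ l, ∑ k', ∑ l', ∑ i, ∑ j, (T k l k' l' i j) ^ 2)

/-- The 6-mode tensor Y with entries y_{klk'l'ij} = Σ_r u_{klr} v_{k'l'r} w_{ijr}. -/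
noncomputable def Ytens {n R : ℕ} (U V W : Fin n → Fin n → Fin R → ℝ) :
    Fin n → Fin n → Fin n → Fin n → Fin n → Fin n → ℝ :=
  fun k l k' l' i j => ∑ r, U k l r * V k' l' r * W i j r

/-- The exact matrix-multiplication tensor X, x_{klk'l'ij} = δ_{ki} δ_{l'j} δ_{lk'}. -/
def Xtens (n : ℕ) : Fin n → Fin n → Fin n → Fin n → Fin n → Fin n → ℝ :=
  fun k l k' l' i j =>
    (if k = i then (1 : ℝ) else 0) * (if l' = j then (1 : ℝ) else 0) *
      (if l = k' then (1 : ℝ) else 0)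

/-- The block bilinear computation f on (mn)×(mn) matrices indexed by Fin n × Fin m
(first index: block position, second index: position within the m×m block). -/
noncomputable def blinf {n R m : ℕ} (U V W : Fin n → Fin n → Fin R → ℝ)
    (A B : Matrix (Fin n × Fin m) (Fin n × Fin m) ℝ) :
    Matrix (Fin n × Fin m) (Fin n × Fin m) ℝ :=
  fun p q => ∑ r, W p.1 q.1 r *
    ∑ z, (∑ k, ∑ l, U k l r * A (k, p.2) (l, z)) *
         (∑ k', ∑ l', V k' l' r * B (k', z) (l', q.2))

/-- κ = n⁻³ Σ_{i,j,l} (1 − Σ_r u_{ilr} v_{ljr} w_{ijr}). -/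
noncomputable def kappa {n R : ℕ} (U V W : Fin n → Fin n → Fin R → ℝ) : ℝ :=
  ((n : ℝ) ^ 3)⁻¹ * ∑ i, ∑ j, ∑ l, (1 - ∑ r, U i l r * V l j r * W i j r)

/-- M = P S : block matrix with m×m block s(j)·I_m at block position (π(j), j). -/
def Mmat {n : ℕ} (m : ℕ) (s : Fin n → ℝ) (π : Equiv.Perm (Fin n)) :
    Matrix (Fin n × Fin m) (Fin n × Fin m) ℝ :=
  fun p q => if p.1 = π q.1 ∧ p.2 = q.2 then s q.1 else 0

/-- The randomized bilinear computation f̂(A,B) = (1−κ)⁻¹ M₁ᵀ f(M₁AM₂ᵀ, M₂BM₃ᵀ) M₃. -/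
noncomputable def fhat {n R : ℕ} (m : ℕ) (U V W : Fin n → Fin n → Fin R → ℝ)
    (s₁ s₂ s₃ : Fin n → ℝ) (π₁ π₂ π₃ : Equiv.Perm (Fin n))
    (A B : Matrix (Fin n × Fin m) (Fin n × Fin m) ℝ) :
    Matrix (Fin n × Fin m) (Fin n × Fin m) ℝ :=
  (1 - kappa U V W)⁻¹ •
    ((Mmat m s₁ π₁)ᵀ *
      blinf U V W (Mmat m s₁ π₁ * A * (Mmat m s₂ π₂)ᵀ) (Mmat m s₂ π₂ * B * (Mmat m s₃ π₃)ᵀ) *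
      Mmat m s₃ π₃)


/-!
Each entry `E_{(i,α),(j,β)}` has the form `∑_r w_{ijr} S_r(α, β)`, so Cauchy–Schwarz over `r`
costs the factor `R` and separates `‖W_{::r}‖²`. For fixed `r`, bounding `|Θ| ≤ θ` and applying
Cauchy–Schwarz first over the block indices `(k, l)` and then over the inner index `z` gives
`S_r(α, β)² ≤ θ² ‖U_{::r}‖² ‖V_{::r}‖² a_α b_β`, where `a_α = ∑_{k,l,z} (A_{kl})_{αz}²` and
`b_β = ∑_{k,l,z} (B_{kl})_{zβ}²` sum over `α` and `β` to `‖A‖²` and `‖B‖²`.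
-/

open Finset

section
variable {ι ι' ζ ρ κ : Type*} [Fintype ι] [Fintype ι'] [Fintype ζ] [Fintype ρ] [Fintype κ]

theorem sq_sum_abs_mul_abs_le (f a : ι → ℝ) :
    (∑ i, |f i| * |a i|) ^ 2 ≤ (∑ i, f i ^ 2) * ∑ i, a i ^ 2 := by
  simpa only [sq_abs] using sum_mul_sq_le_sq_mul_sq univ (fun i => |f i|) (fun i => |a i|)

theorem sq_sum_perturbed_contraction_le (f : ι → ℝ) (g : ι' → ℝ) (a : ι → ζ → ℝ)
    (b : ι' → ζ → ℝ) (t : ι → ι' → ζ → ℝ) {θ : ℝ} (ht : ∀ i i' z, |t i i' z| ≤ θ) :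
    (∑ i, ∑ i', ∑ z, f i * g i' * a i z * b i' z * t i i' z) ^ 2 ≤
      θ ^ 2 * ((∑ i, f i ^ 2) * ∑ i', g i' ^ 2) *
        ((∑ i, ∑ z, a i z ^ 2) * ∑ i', ∑ z, b i' z ^ 2) := by
  set P : ζ → ℝ := fun z => ∑ i, |f i| * |a i z|
  set Q : ζ → ℝ := fun z => ∑ i', |g i'| * |b i' z|
  have habs : |∑ i, ∑ i', ∑ z, f i * g i' * a i z * b i' z * t i i' z| ≤
      θ * ∑ z, P z * Q z := by
    calc _ ≤ ∑ i, ∑ i', ∑ z, |f i| * |g i'| * |a i z| * |b i' z| * θ := by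
          refine (abs_sum_le_sum_abs _ _).trans (sum_le_sum fun i _ => ?_)
          refine (abs_sum_le_sum_abs _ _).trans (sum_le_sum fun i' _ => ?_)
          refine (abs_sum_le_sum_abs _ _).trans (sum_le_sum fun z _ => ?_)
          simp only [abs_mul]
          gcongr
          exact ht i i' z
      _ = ∑ z, ∑ i, ∑ i', |f i| * |g i'| * |a i z| * |b i' z| * θ :=
          (sum_congr rfl fun i _ => sum_comm).trans sum_comm
      _ = θ * ∑ z, P z * Q z := by
          simp only [P, Q, sum_mul_sum]
          simp only [mul_sum]
          exact sum_congr rfl fun z _ => sum_congr rfl fun i _ => sum_congr rfl fun i' _ => by ring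
  have hPQ : (∑ z, P z * Q z) ^ 2 ≤ ((∑ i, f i ^ 2) * ∑ i', g i' ^ 2) *
      ((∑ i, ∑ z, a i z ^ 2) * ∑ i', ∑ z, b i' z ^ 2) :=
    calc _ ≤ (∑ z, P z ^ 2) * ∑ z, Q z ^ 2 := sum_mul_sq_le_sq_mul_sq _ _ _
      _ ≤ (∑ z, (∑ i, f i ^ 2) * ∑ i, a i z ^ 2) *
            ∑ z, (∑ i', g i' ^ 2) * ∑ i', b i' z ^ 2 := by
          gcongr with z _ z _
          · exact sq_sum_abs_mul_abs_le _ _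
          · exact sq_sum_abs_mul_abs_le _ _
      _ = _ := by
          rw [← mul_sum, ← mul_sum, sum_comm (f := fun z i => a i z ^ 2),
            sum_comm (f := fun z i' => b i' z ^ 2)]
          ring
  calc _ = |∑ i, ∑ i', ∑ z, f i * g i' * a i z * b i' z * t i i' z| ^ 2 := (sq_abs _).symm
    _ ≤ (θ * ∑ z, P z * Q z) ^ 2 := pow_le_pow_left₀ (abs_nonneg _) habs 2
    _ = θ ^ 2 * (∑ z, P z * Q z) ^ 2 := mul_pow _ _ _
    _ ≤ _ := by rw [mul_assoc]; exact mul_le_mul_of_nonneg_left hPQ (sq_nonneg θ)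

theorem sum_sq_sum_mul_le_card_mul (w : ι → ρ → ℝ) (s : ρ → κ → ℝ) :
    ∑ i, ∑ k, (∑ r, w i r * s r k) ^ 2 ≤
      Fintype.card ρ * ∑ r, (∑ i, w i r ^ 2) * ∑ k, s r k ^ 2 := by
  calc _ ≤ ∑ i, ∑ k, ∑ r, (Fintype.card ρ : ℝ) * (w i r ^ 2 * s r k ^ 2) := by
        gcongr with i _ k _
        rw [← mul_sum]
        simpa only [mul_pow, card_univ] using
          sq_sum_le_card_mul_sum_sq (s := univ) (f := fun r => w i r * s r k)
    _ = ∑ r, ∑ i, ∑ k, (Fintype.card ρ : ℝ) * (w i r ^ 2 * s r k ^ 2) :=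
        (sum_congr rfl fun i _ => sum_comm).trans sum_comm
    _ = _ := by
        simp only [sum_mul_sum]
        simp only [mul_sum]

end

section
variable {ι κ μ : Type*} [Fintype ι] [Fintype κ] [Fintype μ]

theorem frob_nonneg (A : Matrix ι κ ℝ) : 0 ≤ frob A := Real.sqrt_nonneg _

theorem frob_sq (A : Matrix ι κ ℝ) : frob A ^ 2 = ∑ i, ∑ j, A i j ^ 2 :=
  Real.sq_sqrt (by positivity)

theorem frob_sq_eq_sum_blockRow (A : Matrix (κ × μ) (κ × μ) ℝ) :
    frob A ^ 2 = ∑ α, ∑ k, ∑ l, ∑ z, A (k, α) (l, z) ^ 2 := by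
  simp only [frob_sq, Fintype.sum_prod_type]
  exact sum_comm

theorem frob_sq_eq_sum_blockCol (B : Matrix (κ × μ) (κ × μ) ℝ) :
    frob B ^ 2 = ∑ β, ∑ k, ∑ l, ∑ z, B (k, z) (l, β) ^ 2 := by
  simp only [frob_sq, Fintype.sum_prod_type]
  symm
  rw [sum_comm]
  refine sum_congr rfl fun k _ => ?_
  rw [sum_comm, sum_congr rfl fun l _ => sum_comm]
  exact sum_comm

theorem sum_sq_perturbed_blockContraction_le (u v : κ → κ → ℝ) (A B : Matrix (κ × μ) (κ × μ) ℝ)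
    (t : κ → κ → κ → κ → μ → μ → μ → ℝ) {θ : ℝ}
    (ht : ∀ k l k' l' α β z, |t k l k' l' α β z| ≤ θ) :
    ∑ α, ∑ β, (∑ k, ∑ l, ∑ k', ∑ l', ∑ z,
        u k l * v k' l' * A (k, α) (l, z) * B (k', z) (l', β) * t k l k' l' α β z) ^ 2 ≤
      θ ^ 2 * ((∑ k, ∑ l, u k l ^ 2) * ∑ k, ∑ l, v k l ^ 2) * (frob A ^ 2 * frob B ^ 2) := by
  calc _ ≤ ∑ α, ∑ β, θ ^ 2 * ((∑ k, ∑ l, u k l ^ 2) * ∑ k, ∑ l, v k l ^ 2) *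
          ((∑ k, ∑ l, ∑ z, A (k, α) (l, z) ^ 2) * ∑ k, ∑ l, ∑ z, B (k, z) (l, β) ^ 2) := by
        refine sum_le_sum fun α _ => sum_le_sum fun β _ => ?_
        simpa only [Fintype.sum_prod_type] using
          sq_sum_perturbed_contraction_le (fun p : κ × κ => u p.1 p.2) (fun p : κ × κ => v p.1 p.2)
            (fun (p : κ × κ) z => A (p.1, α) (p.2, z)) (fun (p : κ × κ) z => B (p.1, z) (p.2, β))
            (fun (p p' : κ × κ) z => t p.1 p.2 p'.1 p'.2 α β z) (fun p p' z => ht _ _ _ _ _ _ _)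
    _ = _ := by
        rw [frob_sq_eq_sum_blockRow, frob_sq_eq_sum_blockCol]
        simp only [← mul_sum, ← sum_mul]

theorem frob_sq_le_of_block_eq_sum_mul {ρ : Type*} [Fintype ρ] (E : Matrix (κ × μ) (κ × μ) ℝ)
    (w : κ → κ → ρ → ℝ) (s : ρ → μ → μ → ℝ)
    (hE : ∀ i j α β, E (i, α) (j, β) = ∑ r, w i j r * s r α β) :
    frob E ^ 2 ≤ Fintype.card ρ * ∑ r, (∑ i, ∑ j, w i j r ^ 2) * ∑ α, ∑ β, s r α β ^ 2 := by
  have h := sum_sq_sum_mul_le_card_mul (fun ij : κ × κ => w ij.1 ij.2)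
    (fun r (αβ : μ × μ) => s r αβ.1 αβ.2)
  simp only [Fintype.sum_prod_type] at h
  rw [frob_sq]
  simp only [Fintype.sum_prod_type, hE]
  exact (sum_congr rfl fun i _ => sum_comm).trans_le h

end

theorem stmt16_general (n R m : ℕ)
    (U V W : Fin n → Fin n → Fin R → ℝ)
    (θ : ℝ) (hθ : 0 ≤ θ)
    (A B : Matrix (Fin n × Fin m) (Fin n × Fin m) ℝ)
    (Θ : Fin n → Fin n → Fin n → Fin n → Fin R → Fin m → Fin m → Fin m → ℝ)
    (hΘ : ∀ k l k' l' r α β z, |Θ k l k' l' r α β z| ≤ θ)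
    (E : Matrix (Fin n × Fin m) (Fin n × Fin m) ℝ)
    (hE : ∀ (i j : Fin n) (α β : Fin m), E (i, α) (j, β) =
      ∑ r, W i j r * ∑ k, ∑ l, ∑ k', ∑ l', ∑ z,
        U k l r * V k' l' r * A (k, α) (l, z) * B (k', z) (l', β) * Θ k l k' l' r α β z) :
    frob E ≤ θ * Real.sqrt R * frob A * frob B *
      Real.sqrt (∑ r, (∑ k, ∑ l, (U k l r) ^ 2) * (∑ k, ∑ l, (V k l r) ^ 2) *
        (∑ k, ∑ l, (W k l r) ^ 2)) := by
  set T := ∑ r, (∑ k, ∑ l, (U k l r) ^ 2) * (∑ k, ∑ l, (V k l r) ^ 2) *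
    (∑ k, ∑ l, (W k l r) ^ 2) with hT_def
  have hE_sq : frob E ^ 2 ≤ θ ^ 2 * R * frob A ^ 2 * frob B ^ 2 * T := by
    calc frob E ^ 2 ≤ R * ∑ r, (∑ i, ∑ j, W i j r ^ 2) * ∑ α, ∑ β,
          (∑ k, ∑ l, ∑ k', ∑ l', ∑ z, U k l r * V k' l' r *
            A (k, α) (l, z) * B (k', z) (l', β) * Θ k l k' l' r α β z) ^ 2 := by
          simpa only [Fintype.card_fin] using frob_sq_le_of_block_eq_sum_mul E W _ hE
      _ ≤ R * ∑ r, (∑ i, ∑ j, W i j r ^ 2) *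
          (θ ^ 2 * ((∑ k, ∑ l, U k l r ^ 2) * ∑ k, ∑ l, V k l r ^ 2) *
            (frob A ^ 2 * frob B ^ 2)) := by
          gcongr with r _
          exact sum_sq_perturbed_blockContraction_le _ _ A B _ fun k l k' l' => hΘ k l k' l' r
      _ = θ ^ 2 * R * frob A ^ 2 * frob B ^ 2 * T := by
          rw [hT_def, mul_sum, mul_sum]
          exact sum_congr rfl fun r _ => by ring
  have hT : 0 ≤ T := by positivity
  have hA := frob_nonneg A
  have hB := frob_nonneg B
  refine (pow_le_pow_iff_left₀ (frob_nonneg E) (by positivity) two_ne_zero).mp ?_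
  calc frob E ^ 2 ≤ θ ^ 2 * R * frob A ^ 2 * frob B ^ 2 * T := hE_sq
    _ = _ := by
        rw [mul_pow, mul_pow, mul_pow, mul_pow, Real.sq_sqrt (Nat.cast_nonneg R), Real.sq_sqrt hT]

theorem stmt16 (n R m : ℕ) (hn : 0 < n) (hR : 0 < R) (hm : 1 ≤ m)
    (U V W : Fin n → Fin n → Fin R → ℝ)
    (θ : ℝ) (hθ : 0 ≤ θ)
    (A B : Matrix (Fin n × Fin m) (Fin n × Fin m) ℝ)
    (Θ : Fin n → Fin n → Fin n → Fin n → Fin R → Fin m → Fin m → Fin m → ℝ)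
    (hΘ : ∀ k l k' l' r α β z, |Θ k l k' l' r α β z| ≤ θ)
    (E : Matrix (Fin n × Fin m) (Fin n × Fin m) ℝ)
    (hE : ∀ (i j : Fin n) (α β : Fin m), E (i, α) (j, β) =
      ∑ r, W i j r * ∑ k, ∑ l, ∑ k', ∑ l', ∑ z,
        U k l r * V k' l' r * A (k, α) (l, z) * B (k', z) (l', β) * Θ k l k' l' r α β z) :
    frob E ≤ θ * Real.sqrt R * frob A * frob B *
      Real.sqrt (∑ r, (∑ k, ∑ l, (U k l r) ^ 2) * (∑ k, ∑ l, (V k l r) ^ 2) *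
        (∑ k, ∑ l, (W k l r) ^ 2)) :=
  stmt16_general n R m U V W θ hθ A B Θ hΘ E hE
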